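/- Define r₁ = A₁₁ + A₁₂ + B₁, r₂ = A₂₁ + A₂₂ + B₂, and for x ∈ ℤ × ℤ set α(x) = A₁₁(x+e₁)A₂₂(x+e₂) − A₁₂(x+e₂)A₂₁(x+e₁), β₁(x) = r₁(x)A₂₂(x+e₂) − r₂(x)A₁₂(x+e₂), β₂(x) = r₂(x)A₁₁(x+e₁) − r₁(x)A₂₁(x+e₁). Suppose W : ℕ × ℕ → ℝ satisfies W(x) ≠ 0 and α(x) ≠ 0 for all x ∈ ℕ × ℕ, together with, for all x ∈ ℕ × ℕ: A₁₁(x+e₁)W(x+e₁) + A₁₂(x+e₂)W(x+e₂) = r₁(x)W(x) and A₂₁(x+e₁)W(x+e₁) + A₂₂(x+e₂)W(x+e₂) = r₂(x)W(x). Then for every x ∈ ℕ × ℕ, β₁(x)·α(x+e₂)·β₂(x+e₁) = β₂(x)·α(x+e₁)·β₁(x+e₂). -/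
import Mathlib


open MvPolynomial

noncomputable section

/-- Evaluation of a two-variable real polynomial at a lattice point of `ℕ × ℕ`. -/
def pevN (p : MvPolynomial (Fin 2) ℝ) (x : ℕ × ℕ) : ℝ :=
  eval (fun i => if i = 0 then (x.1 : ℝ) else (x.2 : ℝ)) p

/-- necessity of the compatibility condition
`β₁(x)·α(x+e₂)·β₂(x+e₁) = β₂(x)·α(x+e₁)·β₁(x+e₂)` for the existence of a nonvanishing
weight `W` making `W·𝒟` self-adjoint, when `α(x) ≠ 0`. -/
theorem stmt7 (A11 A12 A21 A22 B1 B2 : MvPolynomial (Fin 2) ℝ)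
    (r1 r2 : MvPolynomial (Fin 2) ℝ)
    (hr1 : r1 = A11 + A12 + B1) (hr2 : r2 = A21 + A22 + B2)
    (α β1 β2 : ℕ × ℕ → ℝ)
    (hα : ∀ x : ℕ × ℕ, α x =
      pevN A11 (x.1 + 1, x.2) * pevN A22 (x.1, x.2 + 1) -
        pevN A12 (x.1, x.2 + 1) * pevN A21 (x.1 + 1, x.2))
    (hβ1 : ∀ x : ℕ × ℕ, β1 x =
      pevN r1 x * pevN A22 (x.1, x.2 + 1) - pevN r2 x * pevN A12 (x.1, x.2 + 1))
    (hβ2 : ∀ x : ℕ × ℕ, β2 x =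
      pevN r2 x * pevN A11 (x.1 + 1, x.2) - pevN r1 x * pevN A21 (x.1 + 1, x.2))
    (W : ℕ × ℕ → ℝ)
    (hW : ∀ x : ℕ × ℕ, W x ≠ 0) (hα0 : ∀ x : ℕ × ℕ, α x ≠ 0)
    (hsa1 : ∀ x : ℕ × ℕ,
      pevN A11 (x.1 + 1, x.2) * W (x.1 + 1, x.2) +
        pevN A12 (x.1, x.2 + 1) * W (x.1, x.2 + 1) = pevN r1 x * W x)
    (hsa2 : ∀ x : ℕ × ℕ,
      pevN A21 (x.1 + 1, x.2) * W (x.1 + 1, x.2) +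
        pevN A22 (x.1, x.2 + 1) * W (x.1, x.2 + 1) = pevN r2 x * W x) :
    ∀ x : ℕ × ℕ,
      β1 x * α (x.1, x.2 + 1) * β2 (x.1 + 1, x.2) =
        β2 x * α (x.1 + 1, x.2) * β1 (x.1, x.2 + 1) := by

  have h1 : ∀ m n : ℕ, α (m, n) * W (m + 1, n) = β1 (m, n) * W (m, n) := by
    intro m n
    have e1 := hsa1 (m, n)
    have e2 := hsa2 (m, n)
    have h := hα (m, n)
    have h' := hβ1 (m, n)
    simp only at e1 e2 h h'
    rw [h, h']
    linear_combination pevN A22 (m, n + 1) * e1 - pevN A12 (m, n + 1) * e2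
  have h2 : ∀ m n : ℕ, α (m, n) * W (m, n + 1) = β2 (m, n) * W (m, n) := by
    intro m n
    have e1 := hsa1 (m, n)
    have e2 := hsa2 (m, n)
    have h := hα (m, n)
    have h' := hβ2 (m, n)
    simp only at e1 e2 h h'
    rw [h, h']
    linear_combination pevN A11 (m + 1, n) * e2 - pevN A21 (m + 1, n) * e1
  rintro ⟨m, n⟩
  simp only
  have e1 := h1 m n
  have e2 := h2 (m + 1) n
  have e3 := h2 m n
  have e4 := h1 m (n + 1)
  have hne : α (m, n) * W (m, n) ≠ 0 := mul_ne_zero (hα0 _) (hW _)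
  apply mul_left_cancel₀ hne
  linear_combination (-(α (m, n) * α (m, n + 1) * β2 (m + 1, n))) * e1
    - α (m, n) ^ 2 * α (m, n + 1) * e2
    + α (m, n) * α (m + 1, n) * β1 (m, n + 1) * e3
    + α (m, n) ^ 2 * α (m + 1, n) * e4
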